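/- Let t⁰ < t¹ and let f : ℝ → ℝ and u : ℝ × [t⁰,t¹] → ℝ be continuously differentiable, with u satisfying ∂u/∂t (x,t) + ∂(f(u(x,t)))/∂x = 0 for all x ∈ ℝ and t ∈ [t⁰,t¹]. Let σ, γ : [t⁰,t¹] → ℝ be differentiable curves with σ(t) ≤ γ(t) for all t, satisfying the no-flow conditions u(σ(t),t)·σ'(t) = f(u(σ(t),t)) and u(γ(t),t)·γ'(t) = f(u(γ(t),t)) for all t ∈ [t⁰,t¹]. Then the function t ↦ ∫_{σ(t)}^{γ(t)} u(x,t) dx is constant on [t⁰,t¹]; in particular ∫_{σ(t¹)}^{γ(t¹)} u(x,t¹) dx = ∫_{σ(t⁰)}^{γ(t⁰)} u(x,t⁰) dx. -/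

import Mathlib

/-!
Write `G s = ∫ x in σ s..γ s, u x s`. At an interior time `t`, split `G s` into the integral
over the frozen interval `[σ t, γ t]` and two pieces at the moving endpoints. By the PDE and the
fundamental theorem of calculus, the first piece has derivative `f (u (σ t) t) - f (u (γ t) t)`;
the piece at an endpoint `c` has derivative `u (c t) t * c'`, which the no-flow condition
identifies with the flux `f (u (c t) t)`. So `G' = 0` in the interior, and `G` is continuous up
to the endpoints, hence constant.
-/

open intervalIntegral Filter Set Topology Function

theorem constant_of_hasDerivAt_zero {g : ℝ → ℝ} {a b : ℝ} (hc : ContinuousOn g (Icc a b))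
    (hd : ∀ t ∈ Ioo a b, HasDerivAt g 0 t) : ∀ t ∈ Icc a b, g t = g a := by
  rintro t ⟨hat, htb⟩
  rcases hat.eq_or_lt with rfl | hat
  · rfl
  obtain ⟨_, _, hslope⟩ := exists_hasDerivAt_eq_slope g (fun _ => 0) hat
    (hc.mono (Icc_subset_Icc_right htb)) (fun x hx => hd x ⟨hx.1, hx.2.trans_le htb⟩)
  rw [eq_div_iff (sub_ne_zero.2 hat.ne')] at hslope
  linarith

section ParametricIntegral

variable {F : ℝ → ℝ → ℝ}

theorem continuousOn_parametric_intervalIntegral_of_continuousOn {S : Set ℝ} {a b : ℝ → ℝ}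
    (hF : ContinuousOn (uncurry F) (univ ×ˢ S)) (ha : ContinuousOn a S) (hb : ContinuousOn b S) :
    ContinuousOn (fun s => ∫ x in a s..b s, F x s) S := by
  rw [continuousOn_iff_continuous_domRestrict] at ha hb ⊢
  have hF' : Continuous (uncurry fun (s : S) (x : ℝ) => F x s) :=
    hF.comp_continuous (f := fun q : S × ℝ => (q.2, (q.1 : ℝ))) (by fun_prop)
      fun q => ⟨mem_univ _, q.1.2⟩
  have hsplit : S.domRestrict (fun s => ∫ x in a s..b s, F x s) =
      fun s : S => (∫ x in (0 : ℝ)..b s, F x s) - ∫ x in (0 : ℝ)..a s, F x s := by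
    funext s
    have hFs : Continuous (F · s) := hF'.uncurry_left s
    exact (integral_interval_sub_left (hFs.intervalIntegrable _ _)
      (hFs.intervalIntegrable _ _)).symm
  rw [hsplit]
  exact (continuous_parametric_intervalIntegral_of_continuous hF' hb).sub
    (continuous_parametric_intervalIntegral_of_continuous hF' ha)

theorem hasDerivAt_parametric_intervalIntegral_of_continuousOn_deriv {F' : ℝ → ℝ → ℝ}
    {a b t : ℝ} {U : Set ℝ} (hU : U ∈ 𝓝 t) (hF : ∀ s ∈ U, ContinuousOn (F · s) (uIcc a b))
    (hF' : ContinuousOn (uncurry F') (uIcc a b ×ˢ U))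
    (hderiv : ∀ x ∈ uIcc a b, ∀ s ∈ U, HasDerivAt (F x ·) (F' x s) s) :
    HasDerivAt (fun s => ∫ x in a..b, F x s) (∫ x in a..b, F' x t) t := by
  obtain ⟨ε, hε, hball⟩ := Metric.nhds_basis_closedBall.mem_iff.1 hU
  obtain ⟨C, hC⟩ := (isCompact_uIcc.prod (isCompact_closedBall t ε)).exists_bound_of_continuousOn
    (hF'.mono (prod_mono subset_rfl hball))
  have htU : t ∈ U := mem_of_mem_nhds hU
  refine (hasDerivAt_integral_of_dominated_loc_of_deriv_le (F := fun s x => F x s)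
    (F' := fun s x => F' x s) (bound := fun _ => C)
    (Metric.closedBall_mem_nhds t hε) ?_ ((hF t htU).intervalIntegrable) ?_ ?_
    intervalIntegrable_const ?_).2
  · filter_upwards [hU] with s hs
    exact ((hF s hs).mono uIoc_subset_uIcc).aestronglyMeasurable measurableSet_uIoc
  · have : ContinuousOn (F' · t) (uIcc a b) :=
      hF'.comp (continuous_id.prodMk continuous_const).continuousOn fun x hx => ⟨hx, htU⟩
    exact (this.mono uIoc_subset_uIcc).aestronglyMeasurable measurableSet_uIoc
  · exact Eventually.of_forall fun x hx s hs => hC (x, s) ⟨uIoc_subset_uIcc hx, hs⟩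
  · exact Eventually.of_forall fun x hx s hs => hderiv x (uIoc_subset_uIcc hx) s (hball hs)

theorem hasDerivAt_parametric_intervalIntegral_upper {c : ℝ → ℝ} {c' t : ℝ}
    (hF : ContinuousAt (uncurry F) (c t, t))
    (hFint : ∀ᶠ s in 𝓝 t, IntervalIntegrable (F · s) MeasureTheory.volume (c t) (c s))
    (hc : HasDerivAt c c' t) :
    HasDerivAt (fun s => ∫ x in c t..c s, F x s) (F (c t) t * c') t := by
  set v := F (c t) t
  -- the integrand frozen at `(c t, t)` carries the derivative; the remainder is `o(c s - c t)`
  set D := fun s => ∫ x in c t..c s, (F x s - v)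
  have hD : D =o[𝓝 t] fun s => c s - c t := by
    refine Asymptotics.isLittleO_iff.2 fun ε hε => ?_
    obtain ⟨δ, hδ, hFδ⟩ := Metric.continuousAt_iff.1 hF ε hε
    filter_upwards [Metric.ball_mem_nhds t hδ,
      hc.continuousAt.eventually (Metric.ball_mem_nhds (c t) hδ)] with s hs hcs
    rw [Real.norm_eq_abs (c s - c t)]
    simp only [D]
    refine norm_integral_le_of_norm_le_const (f := fun x => F x s - v) fun x hx => ?_
    rw [← dist_eq_norm]
    refine (hFδ (x := (x, s)) ?_).le
    rw [Prod.dist_eq, max_lt_iff, Real.dist_eq x]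
    exact ⟨(abs_sub_left_of_mem_uIcc (uIoc_subset_uIcc hx)).trans_lt hcs, hs⟩
  have hD' : HasDerivAt D 0 t := by
    rw [hasDerivAt_iff_isLittleO]
    simpa [D] using hD.trans_isBigO hc.isBigO_sub
  have hsplit : (fun s => ∫ x in c t..c s, F x s) =ᶠ[𝓝 t] fun s => (c s - c t) * v + D s := by
    filter_upwards [hFint] with s hs
    simp only [D, integral_sub hs intervalIntegrable_const, intervalIntegral.integral_const,
      smul_eq_mul]
    ring
  have := ((hc.sub_const (c t)).mul_const v).add hD'
  rw [add_zero, mul_comm] at this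
  exact this.congr_of_eventuallyEq hsplit

end ParametricIntegral

section ScalarConservationLaw

variable {u : ℝ → ℝ → ℝ} {U : Set ℝ}

theorem ContDiffOn.hasDerivAt_snd (hu : ContDiffOn ℝ 1 (uncurry u) (univ ×ˢ U)) (hU : IsOpen U)
    (x : ℝ) {s : ℝ} (hs : s ∈ U) :
    HasDerivAt (u x ·) (fderiv ℝ (uncurry u) (x, s) (0, 1)) s :=
  ((hu.contDiffAt (prod_mem_nhds univ_mem (hU.mem_nhds hs))).differentiableAt
    one_ne_zero).hasFDerivAt.comp_hasDerivAt s ((hasDerivAt_const s x).prodMk (hasDerivAt_id s))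

theorem ContDiffOn.differentiable_fst (hu : ContDiffOn ℝ 1 (uncurry u) (univ ×ˢ U))
    (hU : IsOpen U) {s : ℝ} (hs : s ∈ U) : Differentiable ℝ (u · s) := fun x =>
  ((hu.contDiffAt (prod_mem_nhds univ_mem (hU.mem_nhds hs))).differentiableAt
    one_ne_zero).comp (g := uncurry u) (f := fun y => (y, s)) x
    (differentiableAt_id.prodMk (differentiableAt_const s))

theorem ContDiffOn.continuousOn_deriv_snd (hu : ContDiffOn ℝ 1 (uncurry u) (univ ×ˢ U))
    (hU : IsOpen U) : ContinuousOn (uncurry fun x s => deriv (u x ·) s) (univ ×ˢ U) :=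
  ((ContinuousLinearMap.apply ℝ ℝ ((0 : ℝ), (1 : ℝ))).continuous.comp_continuousOn
    (hu.continuousOn_fderiv_of_isOpen (isOpen_univ.prod hU) le_rfl)).congr
    fun p hp => (hu.hasDerivAt_snd hU p.1 hp.2).deriv

theorem integral_deriv_snd_eq_flux_sub {f : ℝ → ℝ} (hu : ContDiffOn ℝ 1 (uncurry u) (univ ×ˢ U))
    (hU : IsOpen U) (hf : Differentiable ℝ f) {t : ℝ} (ht : t ∈ U)
    (hpde : ∀ x, deriv (fun s => u x s) t + deriv (fun y => f (u y t)) x = 0) (a b : ℝ) :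
    ∫ x in a..b, deriv (u x ·) t = f (u a t) - f (u b t) := by
  have hflux : ∀ x, HasDerivAt (fun y => -f (u y t)) (deriv (u x ·) t) x := fun x => by
    rw [eq_neg_of_add_eq_zero_left (hpde x)]
    exact ((hf.comp (hu.differentiable_fst hU ht)) x).hasDerivAt.neg
  have hint : IntervalIntegrable (fun x => deriv (u x ·) t) MeasureTheory.volume a b :=
    ((hu.continuousOn_deriv_snd hU).comp_continuous (continuous_id.prodMk continuous_const)
      fun _ => ⟨mem_univ _, ht⟩).intervalIntegrable a b
  rw [integral_eq_sub_of_hasDerivAt (fun x _ => hflux x) hint]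
  ring

theorem hasDerivAt_integral_between_noFlow_curves {f σ γ : ℝ → ℝ} {σ' γ' t : ℝ}
    (hu : ContDiffOn ℝ 1 (uncurry u) (univ ×ˢ U)) (hU : IsOpen U) (hf : Differentiable ℝ f)
    (ht : t ∈ U) (hpde : ∀ x, deriv (fun s => u x s) t + deriv (fun y => f (u y t)) x = 0)
    (hσ : HasDerivAt σ σ' t) (hγ : HasDerivAt γ γ' t)
    (hnfσ : u (σ t) t * σ' = f (u (σ t) t)) (hnfγ : u (γ t) t * γ' = f (u (γ t) t)) :
    HasDerivAt (fun s => ∫ x in σ s..γ s, u x s) 0 t := by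
  have hUt : U ∈ 𝓝 t := hU.mem_nhds ht
  have hcont : ∀ s ∈ U, Continuous (u · s) := fun s hs =>
    (hu.differentiable_fst hU hs).continuous
  have hcontAt : ∀ x, ContinuousAt (uncurry u) (x, t) := fun x =>
    hu.continuousOn.continuousAt (prod_mem_nhds univ_mem hUt)
  have hint : ∀ᶠ s in 𝓝 t, ∀ a b, IntervalIntegrable (u · s) MeasureTheory.volume a b :=
    eventually_of_mem hUt fun s hs => (hcont s hs).intervalIntegrable
  have hbulk := hasDerivAt_parametric_intervalIntegral_of_continuousOn_deriv (F := u)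
    (F' := fun x s => deriv (u x ·) s) (a := σ t) (b := γ t) hUt
    (fun s hs => (hcont s hs).continuousOn)
    ((hu.continuousOn_deriv_snd hU).mono (prod_mono (subset_univ _) subset_rfl))
    fun x _ s hs => (hu.hasDerivAt_snd hU x hs).differentiableAt.hasDerivAt
  have hγend := hasDerivAt_parametric_intervalIntegral_upper (F := u) (c := γ) (hcontAt (γ t))
    (hint.mono fun _ hs => hs _ _) hγ
  have hσend := hasDerivAt_parametric_intervalIntegral_upper (F := u) (c := σ) (hcontAt (σ t))
    (hint.mono fun _ hs => hs _ _) hσ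
  have hsplit : (fun s => ∫ x in σ s..γ s, u x s) =ᶠ[𝓝 t] fun s =>
      (∫ x in σ t..γ t, u x s) + (∫ x in γ t..γ s, u x s) - ∫ x in σ t..σ s, u x s := by
    filter_upwards [hint] with s hi
    have := integral_interval_sub_interval_comm' (hi (σ s) (γ s)) (hi (σ t) (γ t)) (hi _ _)
    linarith
  have hsum := (hbulk.add hγend).sub hσend
  rw [integral_deriv_snd_eq_flux_sub hu hU hf ht hpde, hnfσ, hnfγ, sub_add_cancel, sub_self]
    at hsum
  exact hsum.congr_of_eventuallyEq hsplit

end ScalarConservationLaw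

theorem stmt_6_general (t0 t1 : ℝ) (ht : t0 < t1)
    (f : ℝ → ℝ) (u : ℝ → ℝ → ℝ)
    (hf : ContDiff ℝ 1 f)
    (hu : ContDiffOn ℝ 1 (fun p : ℝ × ℝ => u p.1 p.2) (Set.univ ×ˢ Set.Icc t0 t1))
    (hpde : ∀ x : ℝ, ∀ t ∈ Set.Icc t0 t1,
      deriv (fun s => u x s) t + deriv (fun y => f (u y t)) x = 0)
    (σ γ : ℝ → ℝ) (σ' γ' : ℝ → ℝ)
    (hσ : ∀ t ∈ Set.Icc t0 t1, HasDerivAt σ (σ' t) t)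
    (hγ : ∀ t ∈ Set.Icc t0 t1, HasDerivAt γ (γ' t) t)
    (hnfσ : ∀ t ∈ Set.Icc t0 t1, u (σ t) t * σ' t = f (u (σ t) t))
    (hnfγ : ∀ t ∈ Set.Icc t0 t1, u (γ t) t * γ' t = f (u (γ t) t)) :
    (∀ t ∈ Set.Icc t0 t1, (∫ x in σ t..γ t, u x t) = ∫ x in σ t0..γ t0, u x t0) ∧
      (∫ x in σ t1..γ t1, u x t1) = ∫ x in σ t0..γ t0, u x t0 := by
  have hderiv : ∀ t ∈ Ioo t0 t1, HasDerivAt (fun s => ∫ x in σ s..γ s, u x s) 0 t :=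
    fun t htJ =>
      have htI := Ioo_subset_Icc_self htJ
      hasDerivAt_integral_between_noFlow_curves
        (hu.mono (prod_mono subset_rfl Ioo_subset_Icc_self)) isOpen_Ioo
        (hf.differentiable one_ne_zero) htJ (hpde · t htI) (hσ t htI) (hγ t htI)
        (hnfσ t htI) (hnfγ t htI)
  have hcont : ContinuousOn (fun s => ∫ x in σ s..γ s, u x s) (Icc t0 t1) :=
    continuousOn_parametric_intervalIntegral_of_continuousOn hu.continuousOn
      (fun t ht => (hσ t ht).continuousAt.continuousWithinAt)
      (fun t ht => (hγ t ht).continuousAt.continuousWithinAt)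
  have hconst := constant_of_hasDerivAt_zero hcont hderiv
  exact ⟨hconst, hconst t1 (right_mem_Icc.2 ht.le)⟩

/-- Conservation property of the no-flow region for a 1D scalar conservation
law `u_t + f(u)_x = 0`: the amount of the conserved quantity between two
lateral curves with the no-flow slope condition is constant in time. -/
theorem stmt_6 (t0 t1 : ℝ) (ht : t0 < t1)
    (f : ℝ → ℝ) (u : ℝ → ℝ → ℝ)
    (hf : ContDiff ℝ 1 f)
    (hu : ContDiffOn ℝ 1 (fun p : ℝ × ℝ => u p.1 p.2) (Set.univ ×ˢ Set.Icc t0 t1))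
    (hpde : ∀ x : ℝ, ∀ t ∈ Set.Icc t0 t1,
      deriv (fun s => u x s) t + deriv (fun y => f (u y t)) x = 0)
    (σ γ : ℝ → ℝ) (σ' γ' : ℝ → ℝ)
    (hσ : ∀ t ∈ Set.Icc t0 t1, HasDerivAt σ (σ' t) t)
    (hγ : ∀ t ∈ Set.Icc t0 t1, HasDerivAt γ (γ' t) t)
    (hle : ∀ t ∈ Set.Icc t0 t1, σ t ≤ γ t)
    (hnfσ : ∀ t ∈ Set.Icc t0 t1, u (σ t) t * σ' t = f (u (σ t) t))
    (hnfγ : ∀ t ∈ Set.Icc t0 t1, u (γ t) t * γ' t = f (u (γ t) t)) :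
    (∀ t ∈ Set.Icc t0 t1, (∫ x in σ t..γ t, u x t) = ∫ x in σ t0..γ t0, u x t0) ∧
      (∫ x in σ t1..γ t1, u x t1) = ∫ x in σ t0..γ t0, u x t0 :=
  stmt_6_general t0 t1 ht f u hf hu hpde σ γ σ' γ' hσ hγ hnfσ hnfγ
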